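/- arXiv:2412.05639 — 2 statements merged into one kernel-verified Lean document; each statement's English description precedes it below -/
import Mathlib

section
/- Let φ ∈ C(X) satisfy h_∞(φ) = 0 and P(βφ) > β·Max(φ) for all β > 0. Then φ does not freeze: there exist no μ ∈ M_T(X) and β₀ > 0 such that μ is an equilibrium state for βφ for all β ≥ β₀. -/
open MeasureTheory Filter Set
open scoped NNReal ENNReal

variable {X : Type*} [MetricSpace X] [CompactSpace X] [Nonempty X]
  [MeasurableSpace X] [BorelSpace X]

/-- The set `M_T(X)` of `T`-invariant Borel probability measures on `X`,
equipped (as a subset of `ProbabilityMeasure X`) with the weak-* topology. -/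
def InvMeas (T : X → X) : Set (ProbabilityMeasure X) :=
  {μ | (μ : Measure X).map T = (μ : Measure X)}

/-- The pressure `P(φ) = sup { h(μ) + ∫ φ dμ : μ ∈ M_T(X) }`. -/
noncomputable def press (T : X → X) (h : ProbabilityMeasure X → ℝ) (φ : C(X, ℝ)) : ℝ :=
  sSup ((fun μ : ProbabilityMeasure X => h μ + ∫ x, φ x ∂(μ : Measure X)) '' InvMeas T)

/-- `μ` is an equilibrium state for `φ`: `μ ∈ M_T(X)` and `h(μ) + ∫ φ dμ = P(φ)`. -/
def IsEquilib (T : X → X) (h : ProbabilityMeasure X → ℝ) (φ : C(X, ℝ))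
    (μ : ProbabilityMeasure X) : Prop :=
  μ ∈ InvMeas T ∧ h μ + ∫ x, φ x ∂(μ : Measure X) = press T h φ

/-- `Max(φ) = sup { ∫ φ dν : ν ∈ M_T(X) }`. -/
noncomputable def MaxInt (T : X → X) (φ : C(X, ℝ)) : ℝ :=
  sSup ((fun μ : ProbabilityMeasure X => ∫ x, φ x ∂(μ : Measure X)) '' InvMeas T)

/-- `h_∞(φ) = sup { h(μ) : μ ∈ M_T(X), ∫ φ dμ = Max(φ) }`. -/
noncomputable def hInfty (T : X → X) (h : ProbabilityMeasure X → ℝ) (φ : C(X, ℝ)) : ℝ :=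
  sSup (h '' {μ ∈ InvMeas T | ∫ x, φ x ∂(μ : Measure X) = MaxInt T φ})

/-!
If `μ` were an equilibrium state of `β • φ` for all `β ≥ β₀`, the pressure gap would give
`β * (Max(φ) - ∫ φ dμ) < h(μ)` for all large `β`, forcing `∫ φ dμ = Max(φ)`. Then `μ` is a
maximizing measure, so `h(μ) ≤ h_∞(φ) = 0`, whereas the gap at `β₀` gives `h(μ) > 0`.
-/

theorem nonpos_of_forall_ge_mul_lt {d c β₀ : ℝ} (hlt : ∀ β, β₀ ≤ β → β * d < c) : d ≤ 0 := by
  by_contra! hd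
  obtain ⟨β, hβ₀, hβc⟩ :=
    ((eventually_ge_atTop β₀).and ((tendsto_id.atTop_mul_const hd).eventually_ge_atTop c)).exists
  exact (hlt β hβ₀).not_ge hβc

omit [Nonempty X] [BorelSpace X] in
theorem integral_le_maxInt {T : X → X} (φ : C(X, ℝ)) {μ : ProbabilityMeasure X}
    (hμ : μ ∈ InvMeas T) : ∫ x, φ x ∂(μ : Measure X) ≤ MaxInt T φ := by
  refine le_csSup ⟨‖φ‖, ?_⟩ ⟨μ, hμ, rfl⟩
  rintro _ ⟨ν, -, rfl⟩
  calc ∫ x, φ x ∂(ν : Measure X) ≤ ‖∫ x, φ x ∂(ν : Measure X)‖ := Real.le_norm_self _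
    _ ≤ ‖φ‖ * (ν : Measure X).real univ :=
      norm_integral_le_of_norm_le_const (.of_forall φ.norm_coe_le_norm)
    _ = ‖φ‖ := by simp

omit [CompactSpace X] [Nonempty X] [BorelSpace X] in
theorem le_hInfty {T : X → X} {h : ProbabilityMeasure X → ℝ} (hbdd : BddAbove (h '' InvMeas T))
    {φ : C(X, ℝ)} {μ : ProbabilityMeasure X} (hμ : μ ∈ InvMeas T)
    (hmax : ∫ x, φ x ∂(μ : Measure X) = MaxInt T φ) : h μ ≤ hInfty T h φ :=
  le_csSup (hbdd.mono (image_mono fun _ hν => hν.1)) ⟨μ, ⟨hμ, hmax⟩, rfl⟩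

omit [CompactSpace X] [Nonempty X] [BorelSpace X] in
theorem IsEquilib.mul_sub_integral_lt {T : X → X} {h : ProbabilityMeasure X → ℝ} {φ : C(X, ℝ)}
    {β : ℝ} {μ : ProbabilityMeasure X} (hμ : IsEquilib T h (β • φ) μ)
    (hgap : β * MaxInt T φ < press T h (β • φ)) :
    β * (MaxInt T φ - ∫ x, φ x ∂(μ : Measure X)) < h μ := by
  have hpress := hμ.2
  simp only [ContinuousMap.smul_apply, smul_eq_mul, integral_const_mul] at hpress
  linarith

theorem stmt7_general
    (T : X → X)
    (h : ProbabilityMeasure X → ℝ)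
    (hbd : ∃ C : ℝ, ∀ μ ∈ InvMeas T, |h μ| ≤ C)
    (φ : C(X, ℝ)) (hres : hInfty T h φ = 0)
    (hgap : ∀ β : ℝ, 0 < β → β * MaxInt T φ < press T h (β • φ)) :
    ¬ ∃ μ : ProbabilityMeasure X, ∃ β₀ : ℝ, 0 < β₀ ∧
      ∀ β : ℝ, β₀ ≤ β → IsEquilib T h (β • φ) μ := by
  rintro ⟨μ, β₀, hβ₀, hfrozen⟩
  have hμ : μ ∈ InvMeas T := (hfrozen β₀ le_rfl).1
  have hlt : ∀ β, β₀ ≤ β → β * (MaxInt T φ - ∫ x, φ x ∂(μ : Measure X)) < h μ :=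
    fun β hβ => (hfrozen β hβ).mul_sub_integral_lt (hgap β (hβ₀.trans_le hβ))
  have hmax : ∫ x, φ x ∂(μ : Measure X) = MaxInt T φ :=
    le_antisymm (integral_le_maxInt φ hμ) (sub_nonpos.1 (nonpos_of_forall_ge_mul_lt hlt))
  have hpos : 0 < h μ := by simpa [hmax] using hlt β₀ le_rfl
  have hbdd : BddAbove (h '' InvMeas T) := by
    obtain ⟨C, hC⟩ := hbd
    exact ⟨C, by rintro _ ⟨ν, hν, rfl⟩; exact le_of_abs_le (hC ν hν)⟩
  linarith [le_hInfty hbdd hμ hmax]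

theorem stmt7
    (T : X → X) (hT : Continuous T) (hne : (InvMeas T).Nonempty)
    (h : ProbabilityMeasure X → ℝ)
    (hbd : ∃ C : ℝ, ∀ μ ∈ InvMeas T, |h μ| ≤ C)
    (haff : ∀ μ ν : ProbabilityMeasure X, μ ∈ InvMeas T → ν ∈ InvMeas T →
      ∀ t : ℝ, 0 ≤ t → t ≤ 1 → ∀ σ : ProbabilityMeasure X,
        (σ : Measure X) =
          ENNReal.ofReal t • (μ : Measure X) + ENNReal.ofReal (1 - t) • (ν : Measure X) →
        h σ = t * h μ + (1 - t) * h ν)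
    (φ : C(X, ℝ)) (hres : hInfty T h φ = 0)
    (hgap : ∀ β : ℝ, 0 < β → β * MaxInt T φ < press T h (β • φ)) :
    ¬ ∃ μ : ProbabilityMeasure X, ∃ β₀ : ℝ, 0 < β₀ ∧
      ∀ β : ℝ, β₀ ≤ β → IsEquilib T h (β • φ) μ :=
  stmt7_general T h hbd φ hres hgap
end

section
/- Assume additionally that h(ν) ≥ 0 for all ν ∈ M_T(X). Let φ ∈ C(X) and let μ ∈ M_T(X) be an ergodic equilibrium state for φ with h(μ) = 0. Then for every β ≥ 1, μ is an equilibrium state for βφ. -/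
open MeasureTheory Filter Set
open scoped NNReal ENNReal

variable {X : Type*} [MetricSpace X] [CompactSpace X] [Nonempty X]
  [MeasurableSpace X] [BorelSpace X]

/-!
Since `h ≥ 0` and `h μ = 0`, the equilibrium inequality `h ν + ∫ φ dν ≤ ∫ φ dμ` forces `μ` to
maximize `∫ φ` over `M_T(X)`. For `β ≥ 1` split
`h ν + β ∫ φ dν = (h ν + ∫ φ dν) + (β - 1) ∫ φ dν`: both summands are maximized at `μ`.
-/

section Equilibrium

omit [Nonempty X]

lemma ContinuousMap.integral_le_norm (φ : C(X, ℝ)) (ν : ProbabilityMeasure X) :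
    ∫ x, φ x ∂(ν : Measure X) ≤ ‖φ‖ :=
  calc ∫ x, φ x ∂(ν : Measure X) ≤ ‖∫ x, φ x ∂(ν : Measure X)‖ := Real.le_norm_self _
    _ ≤ ‖BoundedContinuousFunction.mkOfCompact φ‖ :=
      (BoundedContinuousFunction.mkOfCompact φ).norm_integral_le_norm (ν : Measure X)
    _ = ‖φ‖ := BoundedContinuousFunction.norm_mkOfCompact φ

variable {T : X → X} {h : ProbabilityMeasure X → ℝ} {φ : C(X, ℝ)} {μ ν : ProbabilityMeasure X}

lemma bddAbove_pressure_image (hbd : BddAbove (h '' InvMeas T)) (φ : C(X, ℝ)) :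
    BddAbove ((fun μ : ProbabilityMeasure X => h μ + ∫ x, φ x ∂(μ : Measure X)) '' InvMeas T) := by
  obtain ⟨C, hC⟩ := hbd
  refine ⟨C + ‖φ‖, ?_⟩
  rintro _ ⟨σ, hσ, rfl⟩
  exact add_le_add (hC ⟨σ, hσ, rfl⟩) (φ.integral_le_norm σ)

lemma le_press (hbd : BddAbove (h '' InvMeas T)) (hν : ν ∈ InvMeas T) :
    h ν + ∫ x, φ x ∂(ν : Measure X) ≤ press T h φ :=
  le_csSup (bddAbove_pressure_image hbd φ) ⟨ν, hν, rfl⟩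

lemma IsEquilib.le (hbd : BddAbove (h '' InvMeas T)) (hμ : IsEquilib T h φ μ)
    (hν : ν ∈ InvMeas T) :
    h ν + ∫ x, φ x ∂(ν : Measure X) ≤ h μ + ∫ x, φ x ∂(μ : Measure X) :=
  hμ.2 ▸ le_press hbd hν

omit [CompactSpace X] [BorelSpace X] in
lemma isEquilib_of_forall_le (hμ : μ ∈ InvMeas T)
    (hle : ∀ ν ∈ InvMeas T,
      h ν + ∫ x, φ x ∂(ν : Measure X) ≤ h μ + ∫ x, φ x ∂(μ : Measure X)) :
    IsEquilib T h φ μ := by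
  refine ⟨hμ, le_antisymm ?_ ?_⟩
  · exact le_csSup ⟨_, by rintro _ ⟨σ, hσ, rfl⟩; exact hle σ hσ⟩ ⟨μ, hμ, rfl⟩
  · exact csSup_le ⟨_, μ, hμ, rfl⟩ (by rintro _ ⟨σ, hσ, rfl⟩; exact hle σ hσ)

lemma IsEquilib.integral_le_of_entropy_eq_zero (hbd : BddAbove (h '' InvMeas T))
    (hnn : ∀ ν ∈ InvMeas T, 0 ≤ h ν) (hμ : IsEquilib T h φ μ) (hzero : h μ = 0)
    (hν : ν ∈ InvMeas T) :
    ∫ x, φ x ∂(ν : Measure X) ≤ ∫ x, φ x ∂(μ : Measure X) := by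
  linarith [hμ.le hbd hν, hnn ν hν]

end Equilibrium

theorem stmt11_general
    (T : X → X)
    (h : ProbabilityMeasure X → ℝ)
    (hbd : ∃ C : ℝ, ∀ μ ∈ InvMeas T, |h μ| ≤ C)
    (hnn : ∀ ν ∈ InvMeas T, 0 ≤ h ν)
    (φ : C(X, ℝ)) (μ : ProbabilityMeasure X)
    (heq : IsEquilib T h φ μ) (hzero : h μ = 0) :
    ∀ β : ℝ, 1 ≤ β → IsEquilib T h (β • φ) μ := by
  intro β hβ
  have hbdd : BddAbove (h '' InvMeas T) := by
    obtain ⟨C, hC⟩ := hbd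
    exact ⟨C, by rintro _ ⟨ν, hν, rfl⟩; exact (abs_le.mp (hC ν hν)).2⟩
  have hsmul (ν : ProbabilityMeasure X) :
      ∫ x, (β • φ) x ∂(ν : Measure X) = β * ∫ x, φ x ∂(ν : Measure X) := by
    simp only [ContinuousMap.smul_apply, smul_eq_mul, integral_const_mul]
  refine isEquilib_of_forall_le heq.1 fun ν hν => ?_
  have hequi := heq.le hbdd hν
  have hmax := heq.integral_le_of_entropy_eq_zero hbdd hnn hzero hν
  rw [hsmul, hsmul]
  linarith [mul_le_mul_of_nonneg_left hmax (sub_nonneg.2 hβ)]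

theorem stmt11
    (T : X → X) (hT : Continuous T) (hne : (InvMeas T).Nonempty)
    (h : ProbabilityMeasure X → ℝ)
    (hbd : ∃ C : ℝ, ∀ μ ∈ InvMeas T, |h μ| ≤ C)
    (haff : ∀ μ ν : ProbabilityMeasure X, μ ∈ InvMeas T → ν ∈ InvMeas T →
      ∀ t : ℝ, 0 ≤ t → t ≤ 1 → ∀ σ : ProbabilityMeasure X,
        (σ : Measure X) =
          ENNReal.ofReal t • (μ : Measure X) + ENNReal.ofReal (1 - t) • (ν : Measure X) →
        h σ = t * h μ + (1 - t) * h ν)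
    (hnn : ∀ ν ∈ InvMeas T, 0 ≤ h ν)
    (φ : C(X, ℝ)) (μ : ProbabilityMeasure X) (herg : Ergodic T (μ : Measure X))
    (heq : IsEquilib T h φ μ) (hzero : h μ = 0) :
    ∀ β : ℝ, 1 ≤ β → IsEquilib T h (β • φ) μ :=
  stmt11_general T h hbd hnn φ μ heq hzero
end
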